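/- Global stability of dynamical networks: let (X, d) be a complete nonempty metric space that is a finite product X = ∏_{i=1}^n X_i of compact metric spaces with the sup metric, and let N : X → X be a map such that for all x, y ∈ X the vector of coordinate distances satisfies d(N(x)_j, N(y)_j) ≤ Σ_i (M_N)_{ji} d(x_i, y_i) for a nonnegative matrix M_N with spectral radius ρ(M_N) < 1. Then N has a globally attracting fixed point: there exists a unique x̃ ∈ X with N(x̃) = x̃ and N^k(x) → x̃ for every x ∈ X. -/

import Mathlib

/-- The spectral radius of a real square matrix: the supremum of the moduli of its
complex eigenvalues. -/
noncomputable def specRad {n : ℕ} (M : Matrix (Fin n) (Fin n) ℝ) : ℝ :=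
  sSup {r : ℝ | ∃ μ ∈ spectrum ℂ (M.map (Complex.ofReal ·)), r = ‖μ‖}

open scoped NNReal ENNReal

set_option maxHeartbeats 1000000
set_option synthInstance.maxHeartbeats 200000

attribute [local instance] Matrix.linftyOpNormedRing Matrix.linftyOpNormedAlgebra

/-- From `specRad M < 1` we get an iterate `M ^ k` with all row sums `< 1`. -/
lemma exists_pow_row_sum_lt_one {n : ℕ} (M : Matrix (Fin n) (Fin n) ℝ)
    (hMnonneg : ∀ i j, 0 ≤ M i j) (hρ : specRad M < 1) :
    ∃ k : ℕ, 0 < k ∧ ∀ j, ∑ i, (M ^ k) j i < 1 := by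
  haveI : CompleteSpace (Matrix (Fin n) (Fin n) ℂ) :=
    FiniteDimensional.complete ℂ (Matrix (Fin n) (Fin n) ℂ)
  set Mc : Matrix (Fin n) (Fin n) ℂ := M.map (Complex.ofReal ·) with hMc
  -- the spectrum is bounded
  have hbdd : BddAbove {r : ℝ | ∃ μ ∈ spectrum ℂ Mc, r = ‖μ‖} := by
    refine ⟨‖Mc‖ * ‖(1 : Matrix (Fin n) (Fin n) ℂ)‖, ?_⟩
    rintro r ⟨μ, hμ, rfl⟩
    simpa using spectrum.norm_le_norm_mul_of_mem hμ
  have hsr : spectralRadius ℂ Mc < 1 := by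
    have hle : spectralRadius ℂ Mc ≤ ENNReal.ofReal (max (specRad M) 0) := by
      rw [spectralRadius]
      refine iSup₂_le fun μ hμ => ?_
      have h1 : ‖μ‖ ≤ specRad M := le_csSup hbdd ⟨μ, hμ, rfl⟩
      rw [← ENNReal.ofReal_coe_nnreal, coe_nnnorm]
      exact ENNReal.ofReal_le_ofReal <| le_max_of_le_left <| by
        simpa using h1
    refine hle.trans_lt ?_
    rw [ENNReal.ofReal_lt_one]
    exact max_lt hρ one_pos
  -- Gelfand's formula
  have hG := spectrum.pow_nnnorm_pow_one_div_tendsto_nhds_spectralRadius Mc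
  have hev : ∀ᶠ m : ℕ in Filter.atTop,
      ((‖Mc ^ m‖₊ : ℝ≥0∞) ^ (1 / (m : ℝ)) < 1) := hG.eventually_lt_const hsr
  obtain ⟨k, hklt, hk1⟩ := (hev.and (Filter.eventually_ge_atTop 1)).exists
  refine ⟨k, hk1, fun j => ?_⟩
  -- deduce ‖Mc^k‖₊ < 1
  have hnorm : (‖Mc ^ k‖₊ : ℝ≥0∞) < 1 := by
    by_contra h
    push_neg at h
    exact absurd (ENNReal.one_le_rpow h (by positivity : (0:ℝ) < 1 / (k:ℝ))) hklt.not_ge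
  have hnorm' : ‖Mc ^ k‖₊ < 1 := by exact_mod_cast hnorm
  -- row sums of the complexified power
  have hrow : ∑ i, ‖(Mc ^ k) j i‖₊ < 1 := by
    rw [Matrix.linfty_opNNNorm_def] at hnorm'
    exact lt_of_le_of_lt (Finset.le_sup (f := fun i => ∑ l, ‖(Mc ^ k) i l‖₊) (Finset.mem_univ j)) hnorm'
  -- identify entries
  have hmap : Mc ^ k = (M ^ k).map (Complex.ofReal ·) := by
    have := map_pow (Complex.ofRealHom.mapMatrix) M k
    exact this.symm
  have hMk : ∀ i l, 0 ≤ (M ^ k) i l := by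
    have : ∀ m, ∀ i l, 0 ≤ (M ^ m) i l := by
      intro m
      induction m with
      | zero => intro i l; by_cases h : i = l <;> simp [Matrix.one_apply, h]
      | succ m ih =>
        intro i l
        rw [pow_succ, Matrix.mul_apply]
        exact Finset.sum_nonneg fun t _ => mul_nonneg (ih i t) (hMnonneg t l)
    exact this k
  have : ∑ i, (M ^ k) j i = ((∑ i, ‖(Mc ^ k) j i‖₊ : ℝ≥0) : ℝ) := by
    push_cast
    refine Finset.sum_congr rfl fun i _ => ?_
    rw [hmap]
    simp [Matrix.map_apply, Complex.norm_real, Real.norm_eq_abs,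
      abs_of_nonneg (hMk j i)]
  rw [this]
  exact_mod_cast hrow

/-- Global stability of dynamical networks: if `X = ∏ Xᵢ` is a finite product of
compact nonempty metric spaces (with the sup metric) and `N : X → X` satisfies the
coordinatewise Lipschitz estimate `d(N(x)ⱼ, N(y)ⱼ) ≤ Σᵢ (M_N)ⱼᵢ d(xᵢ, yᵢ)` for a
nonnegative matrix `M_N` with `ρ(M_N) < 1`, then `N` has a unique fixed point which
attracts every orbit. -/
theorem global_stability {n : ℕ} {X : Fin n → Type*}
    [∀ i, MetricSpace (X i)] [∀ i, CompactSpace (X i)] [∀ i, Nonempty (X i)]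
    (N : (∀ i, X i) → (∀ i, X i)) (M : Matrix (Fin n) (Fin n) ℝ)
    (hMnonneg : ∀ i j, 0 ≤ M i j)
    (hLip : ∀ x y : ∀ i, X i, ∀ j,
      dist (N x j) (N y j) ≤ ∑ i, M j i * dist (x i) (y i))
    (hρ : specRad M < 1) :
    ∃! xt : ∀ i, X i, N xt = xt ∧
      ∀ x : ∀ i, X i,
        Filter.Tendsto (fun k => N^[k] x) Filter.atTop (nhds xt) := by
  obtain ⟨k, hk0, hrow⟩ := exists_pow_row_sum_lt_one M hMnonneg hρ
  -- nonnegativity of matrix powers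
  have hpow : ∀ m : ℕ, ∀ i l, 0 ≤ (M ^ m) i l := by
    intro m
    induction m with
    | zero => intro i l; by_cases h : i = l <;> simp [Matrix.one_apply, h]
    | succ m ih =>
      intro i l
      rw [pow_succ, Matrix.mul_apply]
      exact Finset.sum_nonneg fun t _ => mul_nonneg (ih i t) (hMnonneg t l)
  -- key coordinatewise iterated estimate
  have key : ∀ m : ℕ, ∀ x y : ∀ i, X i, ∀ j,
      dist (N^[m] x j) (N^[m] y j) ≤ ∑ i, (M ^ m) j i * dist (x i) (y i) := by
    intro m
    induction m with
    | zero =>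
      intro x y j
      simp [Matrix.one_apply, ite_mul, Finset.sum_ite_eq]
    | succ m ih =>
      intro x y j
      rw [Function.iterate_succ_apply', Function.iterate_succ_apply']
      calc dist (N (N^[m] x) j) (N (N^[m] y) j)
          ≤ ∑ i, M j i * dist (N^[m] x i) (N^[m] y i) := hLip _ _ j
        _ ≤ ∑ i, M j i * (∑ l, (M ^ m) i l * dist (x l) (y l)) := by
            refine Finset.sum_le_sum fun i _ => ?_
            exact mul_le_mul_of_nonneg_left (ih x y i) (hMnonneg j i)
        _ = ∑ l, (M ^ (m + 1)) j l * dist (x l) (y l) := by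
            rw [pow_succ']
            simp_rw [Matrix.mul_apply, Finset.mul_sum, Finset.sum_mul]
            rw [Finset.sum_comm]
            ring_nf
  -- contraction constant
  set K : ℝ≥0 := Finset.univ.sup fun j => (∑ i, (M ^ k) j i).toNNReal with hK
  have hK1 : K < 1 := by
    rw [hK, Finset.sup_lt_iff (by norm_num : (⊥ : ℝ≥0) < 1)]
    intro j _
    rw [← NNReal.coe_lt_coe, Real.coe_toNNReal']
    exact max_lt (hrow j) one_pos
  have hKrow : ∀ j, ∑ i, (M ^ k) j i ≤ (K : ℝ) := by
    intro j
    refine le_trans (le_max_left _ 0) ?_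
    rw [← Real.coe_toNNReal' (∑ i, (M ^ k) j i)]
    exact_mod_cast Finset.le_sup (f := fun j => (∑ i, (M ^ k) j i).toNNReal)
      (Finset.mem_univ j)
  -- N^[k] is a contraction
  have hdistle : ∀ x y : ∀ i, X i, dist (N^[k] x) (N^[k] y) ≤ K * dist x y := by
    intro x y
    rw [dist_pi_le_iff (by positivity)]
    intro j
    calc dist (N^[k] x j) (N^[k] y j) ≤ ∑ i, (M ^ k) j i * dist (x i) (y i) := key k x y j
      _ ≤ ∑ i, (M ^ k) j i * dist x y := by
          refine Finset.sum_le_sum fun i _ => ?_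
          exact mul_le_mul_of_nonneg_left (dist_le_pi_dist x y i) (hpow k j i)
      _ = (∑ i, (M ^ k) j i) * dist x y := by rw [Finset.sum_mul]
      _ ≤ K * dist x y := mul_le_mul_of_nonneg_right (hKrow j) dist_nonneg
  have hC : ContractingWith K (N^[k]) :=
    ⟨hK1, LipschitzWith.of_dist_le_mul hdistle⟩
  set xt := hC.fixedPoint (N^[k]) with hxt
  have hfix : N^[k] xt = xt := hC.fixedPoint_isFixedPt
  have hNfix : N xt = xt := by
    have h1 : Function.IsFixedPt (N^[k]) (N xt) := by
      show N^[k] (N xt) = N xt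
      rw [← Function.iterate_succ_apply, Function.iterate_succ_apply', hfix]
    exact (hC.fixedPoint_unique h1 :)
  -- bound on distances (compactness)
  obtain ⟨D, hD⟩ := Metric.isBounded_iff.1 (isCompact_univ.isBounded
    (α := ∀ i, X i))
  have hDall : ∀ a b : ∀ i, X i, dist a b ≤ max D 0 :=
    fun a b => le_max_of_le_left (hD (Set.mem_univ a) (Set.mem_univ b))
  -- convergence of the full orbit
  have htend : ∀ x : ∀ i, X i,
      Filter.Tendsto (fun m => N^[m] x) Filter.atTop (nhds xt) := by
    intro x
    rw [tendsto_iff_dist_tendsto_zero]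
    have hbound : ∀ m : ℕ, dist (N^[m] x) xt ≤ (K : ℝ) ^ (m / k) * max D 0 := by
      intro m
      have hsplit : N^[m] x = (N^[k])^[m / k] (N^[m % k] x) := by
        conv_lhs => rw [← Nat.div_add_mod m k, Function.iterate_add_apply,
          Function.iterate_mul]
      have hfixq : (N^[k])^[m / k] xt = xt := Function.IsFixedPt.iterate hfix (m / k)
      calc dist (N^[m] x) xt
          = dist ((N^[k])^[m / k] (N^[m % k] x)) ((N^[k])^[m / k] xt) := by
            rw [hsplit, hfixq]
        _ ≤ ((K ^ (m / k) : ℝ≥0) : ℝ) * dist (N^[m % k] x) xt :=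
            (hC.toLipschitzWith.iterate (m / k)).dist_le_mul _ _
        _ ≤ (K : ℝ) ^ (m / k) * max D 0 := by
            push_cast
            exact mul_le_mul_of_nonneg_left (hDall _ _) (by positivity)
    have hdiv : Filter.Tendsto (fun m : ℕ => m / k) Filter.atTop Filter.atTop := by
      refine Filter.tendsto_atTop_atTop.2 fun b => ⟨b * k, fun m hm => ?_⟩
      exact (Nat.le_div_iff_mul_le hk0).2 hm
    have hlim : Filter.Tendsto (fun m : ℕ => (K : ℝ) ^ (m / k) * max D 0)
        Filter.atTop (nhds 0) := by
      have h1 : Filter.Tendsto (fun q : ℕ => (K : ℝ) ^ q) Filter.atTop (nhds 0) :=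
        tendsto_pow_atTop_nhds_zero_of_lt_one K.coe_nonneg (by exact_mod_cast hK1)
      simpa using (h1.comp hdiv).mul_const (max D 0)
    exact squeeze_zero (fun _ => dist_nonneg) hbound hlim
  refine ⟨xt, ⟨hNfix, htend⟩, ?_⟩
  rintro y ⟨hyfix, hytend⟩
  have hconst : ∀ m : ℕ, N^[m] xt = xt :=
    fun m => (show Function.IsFixedPt N xt from hNfix).iterate m
  have := hytend xt
  simp only [hconst] at this
  exact (tendsto_nhds_unique tendsto_const_nhds this).symm
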